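/- arXiv:1801.06470 — 3 statements merged into one kernel-verified Lean document; each statement's English description precedes it below -/
import Mathlib

section
/- Let D₁, D₂ > 0, u* > 0 and ε ≥ 0 be real numbers. With the coefficients a₁ = a₂ = π/2, c₁ = πD₁/(2(D₁+D₂)), c₂ = πD₂/(2(D₁+D₂)), b₁ = π(D₁+2D₂)/(2(D₁+D₂)), b₂ = π(D₂+2D₁)/(2(D₁+D₂)), let 𝔇 be the 2×2 real matrix with entries 𝔇₁₁ = D₁(1 + ε a₁ u* − ε c₁ u*), 𝔇₁₂ = ε D₁ b₁ u*, 𝔇₂₁ = ε D₂ b₂ u*, 𝔇₂₂ = D₂(1 + ε a₂ u* − ε c₂ u*), and set θ = (D₁ − D₂)²/(4 D₁ D₂). Then the symmetrized matrix Sym(𝔇) = (𝔇 + 𝔇ᵀ)/2 is positive semidefinite if and only if ε ≤ ε* := (1 + √(9 + 4θ)) / ((2 + θ) π u*). -/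
open Matrix

lemma psd_fin_two (α β m : ℝ) (hα : 0 < α) (hβ : 0 < β) :
    (!![α, m; m, β]).PosSemidef ↔ m ^ 2 ≤ α * β := by
  constructor
  · intro h
    have h2 := h.dotProduct_mulVec_nonneg ![β, -m]
    simp [Matrix.mulVec, dotProduct, Fin.sum_univ_two] at h2
    nlinarith [h2]
  · intro h
    refine posSemidef_iff_dotProduct_mulVec.mpr ⟨?_, fun x => ?_⟩
    · rw [Matrix.IsHermitian]
      ext i j
      fin_cases i <;> fin_cases j <;> simp
    · simp [Matrix.mulVec, dotProduct, Fin.sum_univ_two]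
      nlinarith [sq_nonneg (α * x 0 + m * x 1), sq_nonneg (x 1), mul_pos hα hβ, hα.le]

lemma alg_iff (q s t r : ℝ) (hq : 0 < q) (hs : 4 * q ≤ s ^ 2) (ht : 0 ≤ t) (hr : 0 ≤ r)
    (hr2 : q * r ^ 2 = 5 * q + s ^ 2) :
    (s ^ 2 + 4 * q) * t ^ 2 ≤ 16 * q + 8 * q * t ↔
      (s ^ 2 + 4 * q) * t ≤ 4 * q * (1 + r) := by
  have hr9 : r ^ 2 < 9 → False := fun h => by nlinarith [mul_lt_mul_of_pos_left h hq]
  have hr3 : 3 ≤ r := by by_contra h; push_neg at h; exact hr9 (by nlinarith)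
  set A := (s ^ 2 + 4 * q) * t - 4 * q * (1 + r) with hA
  set B := (s ^ 2 + 4 * q) * t - 4 * q * (1 - r) with hB
  have hBpos : 0 < B := by nlinarith
  have hAB : A * B = (s ^ 2 + 4 * q) * ((s ^ 2 + 4 * q) * t ^ 2 - 8 * q * t - 16 * q) := by
    rw [hA, hB]; linear_combination (-16 * q : ℝ) * hr2
  constructor
  · intro h
    have hF : A * B ≤ 0 := by rw [hAB]; nlinarith
    have hA0 : A ≤ 0 := by
      by_contra hc; push_neg at hc; nlinarith [mul_pos hc hBpos]
    linarith [hA0]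
  · intro h
    have hA0 : A ≤ 0 := by linarith
    have : A * B ≤ 0 := mul_nonpos_of_nonpos_of_nonneg hA0 hBpos.le
    rw [hAB] at this
    nlinarith

lemma sym_fin_two (a b c d : ℝ) :
    (1 / 2 : ℝ) • (!![a, b; c, d] + (!![a, b; c, d])ᵀ) =
      !![a, (b + c) / 2; (b + c) / 2, d] := by
  have h : (!![a, b; c, d])ᵀ = !![a, c; b, d] := by
    ext i j; fin_cases i <;> fin_cases j <;> rfl
  rw [h]
  ext i j
  fin_cases i <;> fin_cases j <;> simp [Matrix.add_apply] <;> ring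

/-- Sharp ellipticity bound for the Bruna–Chapman cross-diffusion model (d = 2,
equal particle numbers and sizes), evaluated at `u₁ = u₂ = u* > 0`: the symmetrized
diffusion matrix `Sym(𝔇) = (𝔇 + 𝔇ᵀ)/2` is positive semidefinite iff
`ε ≤ ε* = (1 + √(9+4θ))/((2+θ)πu*)`, where `θ = (D₁−D₂)²/(4D₁D₂)`. -/
theorem sym_diffusion_posSemidef_iff (D₁ D₂ eps ustar : ℝ)
    (hD₁ : 0 < D₁) (hD₂ : 0 < D₂) (hustar : 0 < ustar) (heps : 0 ≤ eps)
    (a₁ a₂ c₁ c₂ b₁ b₂ θ : ℝ)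
    (ha₁ : a₁ = Real.pi / 2) (ha₂ : a₂ = Real.pi / 2)
    (hc₁ : c₁ = Real.pi * D₁ / (2 * (D₁ + D₂)))
    (hc₂ : c₂ = Real.pi * D₂ / (2 * (D₁ + D₂)))
    (hb₁ : b₁ = Real.pi * (D₁ + 2 * D₂) / (2 * (D₁ + D₂)))
    (hb₂ : b₂ = Real.pi * (D₂ + 2 * D₁) / (2 * (D₁ + D₂)))
    (hθ : θ = (D₁ - D₂) ^ 2 / (4 * D₁ * D₂))
    (𝔇 : Matrix (Fin 2) (Fin 2) ℝ)
    (h𝔇 : 𝔇 = !![D₁ * (1 + eps * a₁ * ustar - eps * c₁ * ustar), eps * D₁ * b₁ * ustar;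
                  eps * D₂ * b₂ * ustar, D₂ * (1 + eps * a₂ * ustar - eps * c₂ * ustar)]) :
    ((1 / 2 : ℝ) • (𝔇 + 𝔇ᵀ)).PosSemidef ↔
      eps ≤ (1 + Real.sqrt (9 + 4 * θ)) / ((2 + θ) * Real.pi * ustar) := by
  subst ha₁ ha₂ hc₁ hc₂ hb₁ hb₂ hθ h𝔇
  have hπ := Real.pi_pos
  have hs : (0:ℝ) < D₁ + D₂ := by linarith
  have hq : (0:ℝ) < D₁ * D₂ := mul_pos hD₁ hD₂
  have hθ0 : (0:ℝ) ≤ (D₁ - D₂) ^ 2 / (4 * D₁ * D₂) := by positivity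
  set θ := (D₁ - D₂) ^ 2 / (4 * D₁ * D₂) with hθdef
  set r := Real.sqrt (9 + 4 * θ) with hrdef
  have hr0 : 0 ≤ r := Real.sqrt_nonneg _
  have hr2' : r ^ 2 = 9 + 4 * θ := Real.sq_sqrt (by linarith)
  have hr2 : (D₁ * D₂) * r ^ 2 = 5 * (D₁ * D₂) + (D₁ + D₂) ^ 2 := by
    rw [hr2', hθdef]; field_simp; ring
  have ht : 0 ≤ eps * Real.pi * ustar := by positivity
  have key := alg_iff (D₁ * D₂) (D₁ + D₂) (eps * Real.pi * ustar) r hq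
    (by nlinarith [sq_nonneg (D₁ - D₂)]) ht hr0 hr2
  have hα : 0 < D₁ * (1 + eps * (Real.pi / 2) * ustar -
      eps * (Real.pi * D₁ / (2 * (D₁ + D₂))) * ustar) := by
    apply mul_pos hD₁
    have h1 : eps * (Real.pi * D₁ / (2 * (D₁ + D₂))) * ustar ≤
        eps * (Real.pi / 2) * ustar := by
      apply mul_le_mul_of_nonneg_right _ hustar.le
      apply mul_le_mul_of_nonneg_left _ heps
      rw [div_le_div_iff₀ (by positivity) (by norm_num)]
      nlinarith
    linarith
  have hβ : 0 < D₂ * (1 + eps * (Real.pi / 2) * ustar -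
      eps * (Real.pi * D₂ / (2 * (D₁ + D₂))) * ustar) := by
    apply mul_pos hD₂
    have h1 : eps * (Real.pi * D₂ / (2 * (D₁ + D₂))) * ustar ≤
        eps * (Real.pi / 2) * ustar := by
      apply mul_le_mul_of_nonneg_right _ hustar.le
      apply mul_le_mul_of_nonneg_left _ heps
      rw [div_le_div_iff₀ (by positivity) (by norm_num)]
      nlinarith
    linarith
  have hmid : D₁ * (1 + eps * (Real.pi / 2) * ustar -
        eps * (Real.pi * D₁ / (2 * (D₁ + D₂))) * ustar) *
      (D₂ * (1 + eps * (Real.pi / 2) * ustar -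
        eps * (Real.pi * D₂ / (2 * (D₁ + D₂))) * ustar)) -
      ((eps * D₁ * (Real.pi * (D₁ + 2 * D₂) / (2 * (D₁ + D₂))) * ustar +
        eps * D₂ * (Real.pi * (D₂ + 2 * D₁) / (2 * (D₁ + D₂))) * ustar) / 2) ^ 2 =
      ((16 * (D₁ * D₂) + 8 * (D₁ * D₂) * (eps * Real.pi * ustar)) -
        ((D₁ + D₂) ^ 2 + 4 * (D₁ * D₂)) * (eps * Real.pi * ustar) ^ 2) / 16 := by
    field_simp
    ring
  have hden : (0:ℝ) < (2 + θ) * Real.pi * ustar := by positivity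
  have h4q : (0:ℝ) < 4 * (D₁ * D₂) := by positivity
  have hE : eps * ((2 + θ) * Real.pi * ustar) * (4 * (D₁ * D₂)) =
      ((D₁ + D₂) ^ 2 + 4 * (D₁ * D₂)) * (eps * Real.pi * ustar) := by
    rw [hθdef]; field_simp; ring
  rw [sym_fin_two, psd_fin_two _ _ _ hα hβ, le_div_iff₀ hden]
  constructor
  · intro h
    have hF := key.mp (by linarith)
    exact le_of_mul_le_mul_right (by linarith) h4q
  · intro h
    have h2 := mul_le_mul_of_nonneg_right h h4q.le
    have := key.mpr (by linarith)
    linarith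
end

section
/- Let D₁, D₂ > 0, u* > 0 and ε ≥ 0 be real numbers. With the coefficients a₁ = a₂ = π/2, c₁ = πD₁/(2(D₁+D₂)), c₂ = πD₂/(2(D₁+D₂)), b₁ = π(D₁+2D₂)/(2(D₁+D₂)), b₂ = π(D₂+2D₁)/(2(D₁+D₂)), let 𝔇 be the 2×2 real matrix with entries 𝔇₁₁ = D₁(1 + ε a₁ u* − ε c₁ u*), 𝔇₁₂ = ε D₁ b₁ u*, 𝔇₂₁ = ε D₂ b₂ u*, 𝔇₂₂ = D₂(1 + ε a₂ u* − ε c₂ u*), and set θ = (D₁ − D₂)²/(4 D₁ D₂). If ε < (1 + √(9 + 4θ)) / ((2 + θ) π u*), then the symmetrized matrix Sym(𝔇) = (𝔇 + 𝔇ᵀ)/2 is positive definite (in particular det(Sym(𝔇)) > 0, so Sym(𝔇) is non-degenerate). -/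
/-!
Writing `p = ε π u*`, the symmetrized diffusion matrix has diagonal entries
`Dᵢ (1 + p Dⱼ / (2 (D₁ + D₂))) > 0`, and its determinant collapses to
`D₁ D₂ (4 + 2p - (2 + θ) p²) / 4`. The bound on `ε` says exactly that `p` lies below the
positive root `(1 + √(9 + 4θ)) / (2 + θ)` of this quadratic, so the determinant is positive,
and a symmetric `2 × 2` matrix with positive leading entry and positive determinant is
positive definite.
-/

open Matrix Real

namespace Matrix

lemma posDef_fin_two_of_pos_of_det_pos {a b c : ℝ} (ha : 0 < a) (hdet : 0 < a * c - b ^ 2) :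
    (!![a, b; b, c]).PosDef := by
  refine PosDef.of_dotProduct_mulVec_pos ?_ fun x hx => ?_
  · ext i j
    fin_cases i <;> fin_cases j <;> rfl
  have hform : star x ⬝ᵥ (!![a, b; b, c] *ᵥ x) = a * x 0 ^ 2 + 2 * b * x 0 * x 1 + c * x 1 ^ 2 := by
    simp only [dotProduct, mulVec, Fin.sum_univ_two, star_trivial, Pi.star_apply, of_apply,
      cons_val_zero, cons_val_one, cons_val', empty_val', cons_val_fin_one]
    ring
  have hsq : a * (a * x 0 ^ 2 + 2 * b * x 0 * x 1 + c * x 1 ^ 2)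
      = (a * x 0 + b * x 1) ^ 2 + (a * c - b ^ 2) * x 1 ^ 2 := by ring
  rw [hform]
  refine pos_of_mul_pos_right ?_ ha.le
  rw [hsq]
  by_cases hx₁ : x 1 = 0
  · have hx₀ : x 0 ≠ 0 := fun hx₀ => hx (funext fun i => by fin_cases i <;> assumption)
    rw [hx₁, zero_pow two_ne_zero, mul_zero, add_zero]
    positivity
  · positivity

lemma half_smul_add_transpose_fin_two (a b c d : ℝ) :
    (1 / 2 : ℝ) • (!![a, b; c, d] + (!![a, b; c, d])ᵀ) = !![a, (b + c) / 2; (b + c) / 2, d] := by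
  ext i j
  fin_cases i <;> fin_cases j <;> simp <;> ring

end Matrix

lemma quadratic_pos_of_lt_root {k p : ℝ} (hk : 0 < k) (hp : 0 ≤ p)
    (h : k * p < 1 + √(1 + 4 * k)) : 0 < 4 + 2 * p - k * p ^ 2 := by
  have hroot : √(1 + 4 * k) ^ 2 = 1 + 4 * k := sq_sqrt (by positivity)
  have hone : 1 < √(1 + 4 * k) := (lt_sqrt zero_le_one).mpr (by linarith)
  have hsq : (k * p - 1) ^ 2 < √(1 + 4 * k) ^ 2 :=
    sq_lt_sq' (by nlinarith [mul_nonneg hk.le hp]) (by linarith)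
  -- `(k p - 1)² < 1 + 4k` is `k (k p² - 2p - 4) < 0`
  nlinarith

section BrunaChapman

variable {D₁ D₂ : ℝ}

lemma brunaChapman_diag_eq (hS : D₁ + D₂ ≠ 0) (ε u : ℝ) :
    D₁ * (1 + ε * (π / 2) * u - ε * (π * D₁ / (2 * (D₁ + D₂))) * u)
      = D₁ * (1 + ε * π * u * D₂ / (2 * (D₁ + D₂))) := by
  field_simp
  ring

lemma brunaChapman_sym_det_eq (hD₁ : D₁ ≠ 0) (hD₂ : D₂ ≠ 0) (hS : D₁ + D₂ ≠ 0) (ε u : ℝ) :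
    D₁ * (1 + ε * (π / 2) * u - ε * (π * D₁ / (2 * (D₁ + D₂))) * u)
        * (D₂ * (1 + ε * (π / 2) * u - ε * (π * D₂ / (2 * (D₁ + D₂))) * u))
      - ((ε * D₁ * (π * (D₁ + 2 * D₂) / (2 * (D₁ + D₂))) * u
          + ε * D₂ * (π * (D₂ + 2 * D₁) / (2 * (D₁ + D₂))) * u) / 2) ^ 2
      = D₁ * D₂ / 4 * (4 + 2 * (ε * π * u)
          - (2 + (D₁ - D₂) ^ 2 / (4 * D₁ * D₂)) * (ε * π * u) ^ 2) := by
  field_simp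
  ring

end BrunaChapman

/-- If `ε < ε* = (1 + √(9+4θ))/((2+θ)πu*)`, then the symmetrized diffusion matrix of the
Bruna–Chapman cross-diffusion model (d = 2, equal particle numbers and sizes), evaluated
at `u₁ = u₂ = u* > 0`, is positive definite; in particular its determinant is positive,
so it is non-degenerate. Here `θ = (D₁−D₂)²/(4D₁D₂)`. -/
theorem sym_diffusion_posDef_of_lt (D₁ D₂ eps ustar : ℝ)
    (hD₁ : 0 < D₁) (hD₂ : 0 < D₂) (hustar : 0 < ustar) (heps : 0 ≤ eps)
    (a₁ a₂ c₁ c₂ b₁ b₂ θ : ℝ)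
    (ha₁ : a₁ = Real.pi / 2) (ha₂ : a₂ = Real.pi / 2)
    (hc₁ : c₁ = Real.pi * D₁ / (2 * (D₁ + D₂)))
    (hc₂ : c₂ = Real.pi * D₂ / (2 * (D₁ + D₂)))
    (hb₁ : b₁ = Real.pi * (D₁ + 2 * D₂) / (2 * (D₁ + D₂)))
    (hb₂ : b₂ = Real.pi * (D₂ + 2 * D₁) / (2 * (D₁ + D₂)))
    (hθ : θ = (D₁ - D₂) ^ 2 / (4 * D₁ * D₂))
    (𝔇 : Matrix (Fin 2) (Fin 2) ℝ)
    (h𝔇 : 𝔇 = !![D₁ * (1 + eps * a₁ * ustar - eps * c₁ * ustar), eps * D₁ * b₁ * ustar;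
                  eps * D₂ * b₂ * ustar, D₂ * (1 + eps * a₂ * ustar - eps * c₂ * ustar)])
    (hlt : eps < (1 + Real.sqrt (9 + 4 * θ)) / ((2 + θ) * Real.pi * ustar)) :
    ((1 / 2 : ℝ) • (𝔇 + 𝔇ᵀ)).PosDef ∧ 0 < ((1 / 2 : ℝ) • (𝔇 + 𝔇ᵀ)).det := by
  subst ha₁ ha₂ hc₁ hc₂ hb₁ hb₂
  have hS : D₁ + D₂ ≠ 0 := by positivity
  have hθ_nonneg : 0 ≤ θ := hθ ▸ by positivity
  have hp : 0 ≤ eps * π * ustar := by positivity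
  rw [lt_div_iff₀ (by positivity)] at hlt
  have hquad : 0 < 4 + 2 * (eps * π * ustar) - (2 + θ) * (eps * π * ustar) ^ 2 :=
    quadratic_pos_of_lt_root (by positivity) hp
      (by rw [show 1 + 4 * (2 + θ) = 9 + 4 * θ by ring]; linarith)
  suffices hPD : ((1 / 2 : ℝ) • (𝔇 + 𝔇ᵀ)).PosDef from ⟨hPD, hPD.det_pos⟩
  rw [h𝔇, half_smul_add_transpose_fin_two]
  apply posDef_fin_two_of_pos_of_det_pos
  · rw [brunaChapman_diag_eq hS]
    positivity
  · rw [brunaChapman_sym_det_eq hD₁.ne' hD₂.ne' hS, ← hθ]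
    exact mul_pos (by positivity) hquad
end

section
/- Let d ≥ 1 be an integer, let D₁, D₂ > 0 and ε ∈ ℝ. Define c₁ = (π/d) D₁/(D₁+D₂), c₂ = (π/d) D₂/(D₁+D₂), a₁₂ = (d−1)(c₁+c₂), b₁ = (π/d)[(d−1)D₁ + dD₂]/(D₁+D₂), b₂ = (π/d)[(d−1)D₂ + dD₁]/(D₁+D₂), let a₁, a₂ ∈ ℝ be arbitrary, and set θ₁ = a₁ c₁ − a₁₂ c₂ and θ₂ = a₂ c₂ − a₁₂ c₁. Let u₁, u₂, V₁, V₂ : ℝ^d → ℝ be differentiable at a point x with u₁(x) > 0 and u₂(x) > 0. Then at x the following two vector identities in ℝ^d hold: (Row 1) D₁(1 + ε a₁ u₁ − ε c₁ u₂) ∇u₁ + ε D₁ b₁ u₁ ∇u₂ + u₁ ∇V₁ − ε c₁ u₁ u₂ (∇V₁ − ∇V₂) = D₁ u₁ (1 − ε c₁ u₂) ∇( log u₁ + V₁/D₁ + ε(a₁ u₁ + a₁₂ u₂) ) + ε D₁ c₂ u₁ u₂ ∇( log u₂ + V₂/D₂ + ε(a₂ u₂ + a₁₂ u₁) ) + ε²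 D₁ (θ₁ ∇u₁ − θ₂ ∇u₂) u₁ u₂; (Row 2) D₂(1 + ε a₂ u₂ − ε c₂ u₁) ∇u₂ + ε D₂ b₂ u₂ ∇u₁ + u₂ ∇V₂ − ε c₂ u₁ u₂ (∇V₂ − ∇V₁) = D₂ u₂ (1 − ε c₂ u₁) ∇( log u₂ + V₂/D₂ + ε(a₂ u₂ + a₁₂ u₁) ) + ε D₂ c₁ u₁ u₂ ∇( log u₁ + V₁/D₁ + ε(a₁ u₁ + a₁₂ u₂) ) − ε² D₂ (θ₁ ∇u₁ − θ₂ ∇u₂) u₁ u₂. -/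
/-!
Since `∇ log u = u⁻¹ ∇u`, both sides of each row are linear combinations of `∇u₁, ∇u₂, ∇V₁, ∇V₂`
with scalar coefficients, and comparing coefficients reduces the identity to three relations among
the Bruna–Chapman constants: `D₁ c₂ = D₂ c₁`, `b₁ = a₁₂ + c₂` and `b₂ = a₁₂ + c₁`. The second row is
the first with the species swapped.
-/

theorem gradient_log_add_div_add_linear {E : Type*} [NormedAddCommGroup E]
    [InnerProductSpace ℝ E] [CompleteSpace E] {u w V : E → ℝ} {x : E} (D ε a b : ℝ)
    (hu : DifferentiableAt ℝ u x) (hw : DifferentiableAt ℝ w x) (hV : DifferentiableAt ℝ V x)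
    (hux : u x ≠ 0) :
    gradient (fun y => Real.log (u y) + V y / D + ε * (a * u y + b * w y)) x
      = (u x)⁻¹ • gradient u x + D⁻¹ • gradient V x + ε • (a • gradient u x + b • gradient w x) := by
  apply HasGradientAt.gradient
  rw [hasGradientAt_iff_hasFDerivAt]
  simp only [map_add, map_smul, toDual_gradient, div_eq_mul_inv]
  exact ((hu.hasFDerivAt.log hux).add (hV.hasFDerivAt.mul_const D⁻¹)).add
    (((hu.hasFDerivAt.const_mul a).add (hw.hasFDerivAt.const_mul b)).const_mul ε)

/-- Here `g, g', h, h'` stand for `∇u, ∇u', ∇V, ∇V'`; the order-`ε²` terms of the mobility side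
cancel against the correction exactly by the choice of `θ, θ'`. -/
theorem flux_row_eq_mobility_add_correction {M : Type*} [AddCommGroup M] [Module ℝ M]
    {D D' a a' a₁₂ b c c' θ θ' u u' : ℝ} (ε : ℝ) (g g' h h' : M)
    (hD : D ≠ 0) (hD' : D' ≠ 0) (hu : u ≠ 0) (hu' : u' ≠ 0)
    (hc : D * c' = D' * c) (hb : b = a₁₂ + c')
    (hθ : θ = a * c - a₁₂ * c') (hθ' : θ' = a' * c' - a₁₂ * c) :
    (D * (1 + ε * a * u - ε * c * u')) • g + (ε * D * b * u) • g' + u • h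
        - (ε * c * u * u') • (h - h')
      = (D * u * (1 - ε * c * u')) • (u⁻¹ • g + D⁻¹ • h + ε • (a • g + a₁₂ • g'))
        + (ε * D * c' * u * u') • (u'⁻¹ • g' + D'⁻¹ • h' + ε • (a' • g' + a₁₂ • g))
        + (ε ^ 2 * D * u * u') • (θ • g - θ' • g') := by
  subst hb hθ hθ'
  match_scalars <;> field_simp
  · ring
  · ring
  · linear_combination ε * hc.symm

theorem asymptotic_gradient_flow_flux_identity_general (d : ℕ)
    (D₁ D₂ eps : ℝ) (hD₁ : 0 < D₁) (hD₂ : 0 < D₂)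
    (a₁ a₂ c₁ c₂ a₁₂ b₁ b₂ θ₁ θ₂ : ℝ)
    (hc₁ : c₁ = Real.pi / d * (D₁ / (D₁ + D₂)))
    (hc₂ : c₂ = Real.pi / d * (D₂ / (D₁ + D₂)))
    (ha₁₂ : a₁₂ = ((d : ℝ) - 1) * (c₁ + c₂))
    (hb₁ : b₁ = Real.pi / d * ((((d : ℝ) - 1) * D₁ + d * D₂) / (D₁ + D₂)))
    (hb₂ : b₂ = Real.pi / d * ((((d : ℝ) - 1) * D₂ + d * D₁) / (D₁ + D₂)))
    (hθ₁ : θ₁ = a₁ * c₁ - a₁₂ * c₂) (hθ₂ : θ₂ = a₂ * c₂ - a₁₂ * c₁)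
    (u₁ u₂ V₁ V₂ : EuclideanSpace ℝ (Fin d) → ℝ) (x : EuclideanSpace ℝ (Fin d))
    (hu₁ : DifferentiableAt ℝ u₁ x) (hu₂ : DifferentiableAt ℝ u₂ x)
    (hV₁ : DifferentiableAt ℝ V₁ x) (hV₂ : DifferentiableAt ℝ V₂ x)
    (hu₁pos : 0 < u₁ x) (hu₂pos : 0 < u₂ x) :
    ((D₁ * (1 + eps * a₁ * u₁ x - eps * c₁ * u₂ x)) • gradient u₁ x
        + (eps * D₁ * b₁ * u₁ x) • gradient u₂ x
        + u₁ x • gradient V₁ x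
        - (eps * c₁ * u₁ x * u₂ x) • (gradient V₁ x - gradient V₂ x)
      = (D₁ * u₁ x * (1 - eps * c₁ * u₂ x)) •
          gradient (fun y => Real.log (u₁ y) + V₁ y / D₁
            + eps * (a₁ * u₁ y + a₁₂ * u₂ y)) x
        + (eps * D₁ * c₂ * u₁ x * u₂ x) •
          gradient (fun y => Real.log (u₂ y) + V₂ y / D₂
            + eps * (a₂ * u₂ y + a₁₂ * u₁ y)) x
        + (eps ^ 2 * D₁ * u₁ x * u₂ x) • (θ₁ • gradient u₁ x - θ₂ • gradient u₂ x))
    ∧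
    ((D₂ * (1 + eps * a₂ * u₂ x - eps * c₂ * u₁ x)) • gradient u₂ x
        + (eps * D₂ * b₂ * u₂ x) • gradient u₁ x
        + u₂ x • gradient V₂ x
        - (eps * c₂ * u₁ x * u₂ x) • (gradient V₂ x - gradient V₁ x)
      = (D₂ * u₂ x * (1 - eps * c₂ * u₁ x)) •
          gradient (fun y => Real.log (u₂ y) + V₂ y / D₂
            + eps * (a₂ * u₂ y + a₁₂ * u₁ y)) x
        + (eps * D₂ * c₁ * u₁ x * u₂ x) •
          gradient (fun y => Real.log (u₁ y) + V₁ y / D₁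
            + eps * (a₁ * u₁ y + a₁₂ * u₂ y)) x
        - (eps ^ 2 * D₂ * u₁ x * u₂ x) • (θ₁ • gradient u₁ x - θ₂ • gradient u₂ x)) := by
  have hc : D₁ * c₂ = D₂ * c₁ := by rw [hc₁, hc₂]; ring
  have hb₁' : b₁ = a₁₂ + c₂ := by
    rw [hb₁, ha₁₂, hc₁, hc₂]; field_simp; ring
  have hb₂' : b₂ = a₁₂ + c₁ := by
    rw [hb₂, ha₁₂, hc₁, hc₂]; field_simp; ring
  rw [gradient_log_add_div_add_linear D₁ eps a₁ a₁₂ hu₁ hu₂ hV₁ hu₁pos.ne',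
    gradient_log_add_div_add_linear D₂ eps a₂ a₁₂ hu₂ hu₁ hV₂ hu₂pos.ne']
  constructor
  · exact flux_row_eq_mobility_add_correction eps
      (gradient u₁ x) (gradient u₂ x) (gradient V₁ x) (gradient V₂ x)
      hD₁.ne' hD₂.ne' hu₁pos.ne' hu₂pos.ne' hc hb₁' hθ₁ hθ₂
  · linear_combination (norm := module)
      flux_row_eq_mobility_add_correction eps
        (gradient u₂ x) (gradient u₁ x) (gradient V₂ x) (gradient V₁ x)
        hD₂.ne' hD₁.ne' hu₂pos.ne' hu₁pos.ne' hc.symm hb₂' hθ₂ hθ₁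

/-- Pointwise flux identity underlying the asymptotic gradient-flow structure of the
Bruna–Chapman cross-diffusion model with equal particle numbers: the components of the
flux `𝔇(u)∇u − 𝔉(u)u` coincide with those of `M_ε(u) ∇(δE_ε/δu) − ε²G`. -/
theorem asymptotic_gradient_flow_flux_identity (d : ℕ) (hd : 1 ≤ d)
    (D₁ D₂ eps : ℝ) (hD₁ : 0 < D₁) (hD₂ : 0 < D₂)
    (a₁ a₂ c₁ c₂ a₁₂ b₁ b₂ θ₁ θ₂ : ℝ)
    (hc₁ : c₁ = Real.pi / d * (D₁ / (D₁ + D₂)))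
    (hc₂ : c₂ = Real.pi / d * (D₂ / (D₁ + D₂)))
    (ha₁₂ : a₁₂ = ((d : ℝ) - 1) * (c₁ + c₂))
    (hb₁ : b₁ = Real.pi / d * ((((d : ℝ) - 1) * D₁ + d * D₂) / (D₁ + D₂)))
    (hb₂ : b₂ = Real.pi / d * ((((d : ℝ) - 1) * D₂ + d * D₁) / (D₁ + D₂)))
    (hθ₁ : θ₁ = a₁ * c₁ - a₁₂ * c₂) (hθ₂ : θ₂ = a₂ * c₂ - a₁₂ * c₁)
    (u₁ u₂ V₁ V₂ : EuclideanSpace ℝ (Fin d) → ℝ) (x : EuclideanSpace ℝ (Fin d))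
    (hu₁ : DifferentiableAt ℝ u₁ x) (hu₂ : DifferentiableAt ℝ u₂ x)
    (hV₁ : DifferentiableAt ℝ V₁ x) (hV₂ : DifferentiableAt ℝ V₂ x)
    (hu₁pos : 0 < u₁ x) (hu₂pos : 0 < u₂ x) :
    ((D₁ * (1 + eps * a₁ * u₁ x - eps * c₁ * u₂ x)) • gradient u₁ x
        + (eps * D₁ * b₁ * u₁ x) • gradient u₂ x
        + u₁ x • gradient V₁ x
        - (eps * c₁ * u₁ x * u₂ x) • (gradient V₁ x - gradient V₂ x)
      = (D₁ * u₁ x * (1 - eps * c₁ * u₂ x)) •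
          gradient (fun y => Real.log (u₁ y) + V₁ y / D₁
            + eps * (a₁ * u₁ y + a₁₂ * u₂ y)) x
        + (eps * D₁ * c₂ * u₁ x * u₂ x) •
          gradient (fun y => Real.log (u₂ y) + V₂ y / D₂
            + eps * (a₂ * u₂ y + a₁₂ * u₁ y)) x
        + (eps ^ 2 * D₁ * u₁ x * u₂ x) • (θ₁ • gradient u₁ x - θ₂ • gradient u₂ x))
    ∧
    ((D₂ * (1 + eps * a₂ * u₂ x - eps * c₂ * u₁ x)) • gradient u₂ x
        + (eps * D₂ * b₂ * u₂ x) • gradient u₁ x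
        + u₂ x • gradient V₂ x
        - (eps * c₂ * u₁ x * u₂ x) • (gradient V₂ x - gradient V₁ x)
      = (D₂ * u₂ x * (1 - eps * c₂ * u₁ x)) •
          gradient (fun y => Real.log (u₂ y) + V₂ y / D₂
            + eps * (a₂ * u₂ y + a₁₂ * u₁ y)) x
        + (eps * D₂ * c₁ * u₁ x * u₂ x) •
          gradient (fun y => Real.log (u₁ y) + V₁ y / D₁
            + eps * (a₁ * u₁ y + a₁₂ * u₂ y)) x
        - (eps ^ 2 * D₂ * u₁ x * u₂ x) • (θ₁ • gradient u₁ x - θ₂ • gradient u₂ x)) :=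
  asymptotic_gradient_flow_flux_identity_general d D₁ D₂ eps hD₁ hD₂ a₁ a₂ c₁ c₂ a₁₂ b₁ b₂ θ₁ θ₂ hc₁
    hc₂ ha₁₂ hb₁ hb₂ hθ₁ hθ₂ u₁ u₂ V₁ V₂ x hu₁ hu₂ hV₁ hV₂ hu₁pos hu₂pos
end
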